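/- arXiv:2107.02474 — 5 statements merged into one kernel-verified Lean document; each statement's English description precedes it below -/
import Mathlib

section
/- Consider the iteration η^{k+1} = (1-α)η^k + α·a(ξ^k), ξ^{k+1} = (1-β)ξ^k + β·b(η^{k+1}), where a and b are globally Lipschitz with constants L_a and L_b satisfying L_a·L_b < 1, α, β ∈ (0,1], and there exists a fixed point (η*, ξ*) with a(ξ*) = η* and b(η*) = ξ*. Then for any initial condition, the iterates (η^k, ξ^k) converge to (η*, ξ*). -/
open Filter

set_option maxHeartbeats 1000000 in
/-- Convergence of the coupled fixed-point iteration
`η^{k+1} = (1-α)η^k + α a(ξ^k)`, `ξ^{k+1} = (1-β)ξ^k + β b(η^{k+1})`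
to the fixed point `(η*, ξ*)` when `L_a L_b < 1` and `α, β ∈ (0,1]`. -/
theorem stmt_6 {m n : ℕ}
    (a : EuclideanSpace ℝ (Fin m) → EuclideanSpace ℝ (Fin n))
    (b : EuclideanSpace ℝ (Fin n) → EuclideanSpace ℝ (Fin m))
    (La Lb : NNReal) (ha : LipschitzWith La a) (hb : LipschitzWith Lb b)
    (hLab : (La : ℝ) * (Lb : ℝ) < 1)
    (α β : ℝ) (hα0 : 0 < α) (hα1 : α ≤ 1) (hβ0 : 0 < β) (hβ1 : β ≤ 1)
    (ηs : EuclideanSpace ℝ (Fin n)) (ξs : EuclideanSpace ℝ (Fin m))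
    (hfix1 : a ξs = ηs) (hfix2 : b ηs = ξs)
    (η : ℕ → EuclideanSpace ℝ (Fin n)) (ξ : ℕ → EuclideanSpace ℝ (Fin m))
    (hη : ∀ k, η (k + 1) = (1 - α) • η k + α • a (ξ k))
    (hξ : ∀ k, ξ (k + 1) = (1 - β) • ξ k + β • b (η (k + 1))) :
    Tendsto η atTop (nhds ηs) ∧ Tendsto ξ atTop (nhds ξs) := by
  set E : ℕ → ℝ := fun k => ‖η k - ηs‖ with hEdef
  set F : ℕ → ℝ := fun k => ‖ξ k - ξs‖ with hFdef
  have hLa0 : (0:ℝ) ≤ La := La.coe_nonneg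
  have hLb0 : (0:ℝ) ≤ Lb := Lb.coe_nonneg
  have hLab0 : (0:ℝ) ≤ (La:ℝ) * Lb := mul_nonneg hLa0 hLb0
  -- choose weight t
  set δ : ℝ := (1 - (La:ℝ) * Lb) / (2 * ((Lb:ℝ) + 1)) with hδdef
  have hδ0 : 0 < δ := by rw [hδdef]; exact div_pos (by linarith) (by positivity)
  have hden : 0 < 1 - α * ((La:ℝ) * Lb) := by nlinarith
  set t : ℝ := α * ((La:ℝ) + δ) / (β * (1 - α * ((La:ℝ) * Lb))) with htdef
  have ht0 : 0 < t := by positivity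
  -- key δ bound: δ * Lb ≤ (1 - La*Lb)/2
  have hδLb : δ * Lb ≤ (1 - (La:ℝ) * Lb) / 2 := by
    rw [hδdef, div_mul_eq_mul_div, div_le_div_iff₀ (by positivity) (by norm_num)]
    nlinarith
  -- (A): t * β * Lb * (1 - α) < α
  have hA : t * β * Lb * (1 - α) < α := by
    have key : ((La:ℝ) + δ) * Lb * (1 - α) < 1 - α * ((La:ℝ) * Lb) := by
      nlinarith [mul_nonneg (mul_nonneg hδ0.le hLb0) hα0.le]
    rw [htdef, div_mul_eq_mul_div, div_mul_eq_mul_div, div_mul_eq_mul_div,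
      div_lt_iff₀ (by positivity)]
    have := mul_lt_mul_of_pos_left key (mul_pos hα0 hβ0)
    nlinarith [this]
  -- (B): α * La + t * α * La * β * Lb < t * β
  have hB : α * La + t * (α * La) * (β * Lb) < t * β := by
    have : t * β * (1 - α * ((La:ℝ) * Lb)) = α * ((La:ℝ) + δ) := by
      rw [htdef, div_mul_eq_mul_div, div_mul_eq_mul_div, div_eq_iff (mul_pos hβ0 hden).ne']; ring
    nlinarith [mul_pos hα0 hδ0]
  -- contraction factors
  set ρ1 : ℝ := (1 - α) * (1 + t * β * Lb) with hρ1
  set ρ2 : ℝ := (α * La + t * (1 - β) + t * β * Lb * (α * La)) / t with hρ2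
  set ρ : ℝ := max ρ1 ρ2 with hρdef
  have hρ1lt : ρ1 < 1 := by rw [hρ1]; nlinarith
  have hρ2lt : ρ2 < 1 := by
    rw [hρ2, div_lt_one ht0]; nlinarith
  have hρlt : ρ < 1 := max_lt hρ1lt hρ2lt
  have hρ0 : 0 ≤ ρ := le_max_of_le_left (by nlinarith [mul_nonneg (mul_nonneg (mul_nonneg ht0.le hβ0.le) hLb0) (sub_nonneg.2 hα1)])
  -- one-step inequalities
  have hE0 : ∀ k, 0 ≤ E k := fun k => norm_nonneg _
  have hF0 : ∀ k, 0 ≤ F k := fun k => norm_nonneg _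
  have hEstep : ∀ k, E (k + 1) ≤ (1 - α) * E k + α * La * F k := by
    intro k
    have hid : η (k + 1) - ηs = (1 - α) • (η k - ηs) + α • (a (ξ k) - a ξs) := by
      rw [hη, hfix1]; module
    have hlip : ‖a (ξ k) - a ξs‖ ≤ (La:ℝ) * F k := by
      have := ha.dist_le_mul (ξ k) ξs
      simpa [dist_eq_norm] using this
    calc E (k + 1) = ‖(1 - α) • (η k - ηs) + α • (a (ξ k) - a ξs)‖ := by
            rw [hEdef]; simp only; rw [hid]
      _ ≤ ‖(1 - α) • (η k - ηs)‖ + ‖α • (a (ξ k) - a ξs)‖ := norm_add_le _ _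
      _ = (1 - α) * E k + α * ‖a (ξ k) - a ξs‖ := by
            rw [norm_smul, norm_smul, Real.norm_eq_abs, Real.norm_eq_abs,
              abs_of_nonneg (by linarith), abs_of_nonneg hα0.le]
      _ ≤ (1 - α) * E k + α * ((La:ℝ) * F k) := by
            gcongr
      _ = (1 - α) * E k + α * La * F k := by ring
  have hFstep : ∀ k, F (k + 1) ≤ (1 - β) * F k + β * Lb * E (k + 1) := by
    intro k
    have hid : ξ (k + 1) - ξs = (1 - β) • (ξ k - ξs) + β • (b (η (k + 1)) - b ηs) := by
      rw [hξ, hfix2]; module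
    have hlip : ‖b (η (k + 1)) - b ηs‖ ≤ (Lb:ℝ) * E (k + 1) := by
      have := hb.dist_le_mul (η (k + 1)) ηs
      simpa [dist_eq_norm] using this
    calc F (k + 1) = ‖(1 - β) • (ξ k - ξs) + β • (b (η (k + 1)) - b ηs)‖ := by
            rw [hFdef]; simp only; rw [hid]
      _ ≤ ‖(1 - β) • (ξ k - ξs)‖ + ‖β • (b (η (k + 1)) - b ηs)‖ := norm_add_le _ _
      _ = (1 - β) * F k + β * ‖b (η (k + 1)) - b ηs‖ := by
            rw [norm_smul, norm_smul, Real.norm_eq_abs, Real.norm_eq_abs,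
              abs_of_nonneg (by linarith), abs_of_nonneg hβ0.le]
      _ ≤ (1 - β) * F k + β * ((Lb:ℝ) * E (k + 1)) := by gcongr
      _ = (1 - β) * F k + β * Lb * E (k + 1) := by ring
  -- Lyapunov function
  set V : ℕ → ℝ := fun k => E k + t * F k with hVdef
  have hVstep : ∀ k, V (k + 1) ≤ ρ * V k := by
    intro k
    have h1 := hEstep k
    have h2 := hFstep k
    have hρ1le : ρ1 ≤ ρ := le_max_left _ _
    have hρ2le : ρ2 ≤ ρ := le_max_right _ _
    have hCf : α * La + t * (1 - β) + t * β * Lb * (α * La) ≤ ρ * t := by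
      have := (div_le_iff₀ ht0).mp hρ2le
      linarith
    have key : V (k + 1) ≤ (1 + t * β * Lb) * E (k + 1) + t * (1 - β) * F k := by
      have : t * F (k + 1) ≤ t * ((1 - β) * F k + β * Lb * E (k + 1)) := by
        exact mul_le_mul_of_nonneg_left h2 ht0.le
      simp only [hVdef]; nlinarith
    have key2 : (1 + t * β * Lb) * E (k + 1) ≤
        (1 + t * β * Lb) * ((1 - α) * E k + α * La * F k) := by
      have hpos : 0 ≤ 1 + t * β * Lb := by positivity
      exact mul_le_mul_of_nonneg_left h1 hpos
    have hEk := hE0 k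
    have hFk := hF0 k
    have hρ1E : (1 - α) * (1 + t * β * Lb) * E k ≤ ρ * E k :=
      mul_le_mul_of_nonneg_right hρ1le hEk
    have hCfF : (α * La + t * (1 - β) + t * β * Lb * (α * La)) * F k ≤ ρ * t * F k :=
      mul_le_mul_of_nonneg_right hCf hFk
    simp only [hVdef] at *
    nlinarith
  have hVgeom : ∀ k, V k ≤ V 0 * ρ ^ k := by
    intro k
    induction k with
    | zero => simp
    | succ k ih =>
      calc V (k + 1) ≤ ρ * V k := hVstep k
        _ ≤ ρ * (V 0 * ρ ^ k) := mul_le_mul_of_nonneg_left ih hρ0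
        _ = V 0 * ρ ^ (k + 1) := by ring
  have hV0 : ∀ k, 0 ≤ V k := fun k => by
    have := hE0 k; have := hF0 k; simp only [hVdef]; nlinarith
  have hVlim : Tendsto V atTop (nhds 0) := by
    have hgeo : Tendsto (fun k => V 0 * ρ ^ k) atTop (nhds 0) := by
      have := tendsto_pow_atTop_nhds_zero_of_lt_one hρ0 hρlt
      simpa using this.const_mul (V 0)
    exact squeeze_zero hV0 hVgeom hgeo
  have hElim : Tendsto E atTop (nhds 0) := by
    refine squeeze_zero hE0 (fun k => ?_) hVlim
    have := hF0 k
    simp only [hVdef]; nlinarith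
  have hFlim : Tendsto F atTop (nhds 0) := by
    have hVt : Tendsto (fun k => (1 / t) * V k) atTop (nhds 0) := by
      simpa using hVlim.const_mul (1 / t)
    refine squeeze_zero hF0 (fun k => ?_) hVt
    have hEk := hE0 k
    show F k ≤ 1 / t * (E k + t * F k)
    rw [one_div, inv_mul_eq_div, le_div_iff₀ ht0]
    nlinarith
  constructor
  · exact tendsto_iff_norm_sub_tendsto_zero.mpr hElim
  · exact tendsto_iff_norm_sub_tendsto_zero.mpr hFlim
end

section
/- Let α, β ∈ (0,1] and L_a, L_b ≥ 0 with L_a·L_b < 1. Then the symmetric 2×2 matrix [[1-α, √(α(1-α)β L_a L_b)], [√(α(1-α)β L_a L_b), 1-β+αβ L_a L_b]] has all eigenvalues strictly less than 1 (i.e., I minus this matrix is positive definite). -/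
/-!
`1 - M = !![α, -s; -s, β - αβ L_a L_b]` with `s² = α(1-α)β L_a L_b`, whose leading entry is `α > 0`
and whose determinant is `αβ(1 - L_a L_b) > 0`; a symmetric 2×2 matrix with these two properties
is positive definite (Sylvester's criterion), as completing the square shows.
-/

open Matrix

theorem Matrix.posDef_of_fin_two {a b d : ℝ} (ha : 0 < a) (hdet : 0 < a * d - b ^ 2) :
    (!![a, b; b, d]).PosDef := by
  rw [posDef_iff_dotProduct_mulVec]
  refine ⟨by ext i j; fin_cases i <;> fin_cases j <;> rfl, fun x hx => ?_⟩
  have hquad : a * (x ⬝ᵥ (!![a, b; b, d] *ᵥ x)) =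
      (a * x 0 + b * x 1) ^ 2 + (a * d - b ^ 2) * x 1 ^ 2 := by
    simp only [dotProduct, mulVec, Fin.sum_univ_two, Fin.isValue, of_apply, cons_val',
      cons_val_zero, cons_val_fin_one, cons_val_one]
    ring
  have hsum : 0 < (a * x 0 + b * x 1) ^ 2 + (a * d - b ^ 2) * x 1 ^ 2 := by
    by_cases h1 : x 1 = 0
    · have h0 : x 0 ≠ 0 := fun h0 => hx (by ext i; fin_cases i <;> assumption)
      simpa [h1] using sq_pos_of_ne_zero (mul_ne_zero ha.ne' h0)
    · positivity
  have hpos : 0 < x ⬝ᵥ (!![a, b; b, d] *ᵥ x) := pos_of_mul_pos_right (hquad ▸ hsum) ha.le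
  simpa using hpos

theorem stmt_8_general (α β La Lb : ℝ)
    (hα0 : 0 < α) (hα1 : α ≤ 1) (hβ0 : 0 < β)
    (hLa : 0 ≤ La) (hLb : 0 ≤ Lb) (hLab : La * Lb < 1) :
    ((1 : Matrix (Fin 2) (Fin 2) ℝ) -
        !![1 - α, Real.sqrt (α * (1 - α) * β * La * Lb);
           Real.sqrt (α * (1 - α) * β * La * Lb), 1 - β + α * β * La * Lb]).PosDef := by
  set s := Real.sqrt (α * (1 - α) * β * La * Lb)
  have hs : s ^ 2 = α * (1 - α) * β * La * Lb :=
    Real.sq_sqrt (by have := sub_nonneg.2 hα1; positivity)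
  have hdiff : (1 : Matrix (Fin 2) (Fin 2) ℝ) - !![1 - α, s; s, 1 - β + α * β * La * Lb] =
      !![α, -s; -s, β - α * β * La * Lb] := by
    ext i j; fin_cases i <;> fin_cases j <;> simp; ring
  have hdet : α * (β - α * β * La * Lb) - (-s) ^ 2 = α * β * (1 - La * Lb) := by
    rw [neg_sq, hs]; ring
  rw [hdiff]
  refine Matrix.posDef_of_fin_two hα0 ?_
  rw [hdet]
  have := sub_pos.2 hLab
  positivity

/-- For `α, β ∈ (0,1]` and `L_a, L_b ≥ 0` with `L_a L_b < 1`, the symmetric matrix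
`[[1-α, √(α(1-α)β L_a L_b)], [√(α(1-α)β L_a L_b), 1-β+αβ L_a L_b]]` has all eigenvalues
strictly less than 1, i.e. `I` minus this matrix is positive definite. -/
theorem stmt_8 (α β La Lb : ℝ)
    (hα0 : 0 < α) (hα1 : α ≤ 1) (hβ0 : 0 < β) (hβ1 : β ≤ 1)
    (hLa : 0 ≤ La) (hLb : 0 ≤ Lb) (hLab : La * Lb < 1) :
    ((1 : Matrix (Fin 2) (Fin 2) ℝ) -
        !![1 - α, Real.sqrt (α * (1 - α) * β * La * Lb);
           Real.sqrt (α * (1 - α) * β * La * Lb), 1 - β + α * β * La * Lb]).PosDef :=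
  stmt_8_general α β La Lb hα0 hα1 hβ0 hLa hLb hLab
end

section
/- Let α, β ∈ (0,1] and L_a, L_b ≥ 0 with L_a·L_b < 1. Then the spectral radius of the 2×2 nonnegative matrix C = [[1-α, α L_a], [(1-α)β L_b, (1-β)+αβ L_a L_b]] is strictly less than 1. -/
/-! The eigenvalues of `C` are the roots of `μ² - tμ + d` with `t = tr C ≥ 0` and
`d = det C = (1 - α)(1 - β) ∈ [0, 1)`. By the Schur–Cohn (Jury) criterion both roots lie in the
open unit disc as soon as `|t| < 1 + d`, and here `1 + d - t = αβ(1 - L_a L_b) > 0`. A complex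
conjugate pair has modulus `√d`; a real root is trapped in `(-1, 1)` because the polynomial is
positive at `±1` and its vertex `t/2` lies in between. -/

open Matrix

open scoped NNReal in
theorem spectrum.spectralRadius_lt_of_finite_of_forall_lt {𝕜 A : Type*} [NormedField 𝕜] [Ring A]
    [Algebra 𝕜 A] {a : A} (hfin : (spectrum 𝕜 a).Finite) (hne : (spectrum 𝕜 a).Nonempty)
    {r : ℝ≥0} (hr : ∀ k ∈ spectrum 𝕜 a, ‖k‖₊ < r) : spectralRadius 𝕜 a < r :=
  sSup_image.symm.trans_lt <| (hfin.isCompact.sSup_lt_iff_of_continuous hne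
    continuous_enorm.continuousOn (r : ENNReal)).mpr (by simpa using hr)

theorem Matrix.spectralRadius_lt_one_of_forall_norm_lt_one {n : Type*} [Fintype n]
    [DecidableEq n] [Nonempty n] (A : Matrix n n ℂ) (h : ∀ μ ∈ spectrum ℂ A, ‖μ‖ < 1) :
    spectralRadius ℂ A < 1 := by
  simpa using spectrum.spectralRadius_lt_of_finite_of_forall_lt A.finite_spectrum
    (spectrum.nonempty_of_isAlgClosed_of_finiteDimensional ℂ A) (r := 1)
    fun μ hμ => mod_cast h μ hμ

theorem Matrix.mem_spectrum_iff_fin_two {K : Type*} [Field K] (A : Matrix (Fin 2) (Fin 2) K)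
    (μ : K) : μ ∈ spectrum K A ↔ μ ^ 2 - A.trace * μ + A.det = 0 := by
  simp [mem_spectrum_iff_isRoot_charpoly, charpoly_fin_two]

theorem Complex.norm_lt_one_of_sq_sub_mul_add_eq_zero {t d : ℝ} (hd : d < 1) (ht : |t| < 1 + d)
    {μ : ℂ} (hμ : μ ^ 2 - t * μ + d = 0) : ‖μ‖ < 1 := by
  obtain ⟨x, y⟩ := μ
  have hre := congrArg Complex.re hμ
  have him := congrArg Complex.im hμ
  simp only [sq, sub_re, add_re, mul_re, sub_im, add_im, mul_im, ofReal_re, ofReal_im, zero_re,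
    zero_im, sub_zero, zero_mul, add_zero] at hre him
  have hsq : ‖(⟨x, y⟩ : ℂ)‖ ^ 2 = x ^ 2 + y ^ 2 := by
    rw [Complex.sq_norm, Complex.normSq_mk]; ring
  rw [abs_lt] at ht
  suffices x ^ 2 + y ^ 2 < 1 by nlinarith [norm_nonneg (⟨x, y⟩ : ℂ)]
  rcases eq_or_ne y 0 with rfl | hy
  · have hlt : x < 1 := by
      by_contra! h
      nlinarith [mul_nonneg (sub_nonneg.mpr h) (by linarith : (0 : ℝ) ≤ x + 1 - t)]
    have hgt : -1 < x := by
      by_contra! h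
      nlinarith [mul_nonneg (by linarith : (0 : ℝ) ≤ -1 - x) (by linarith : (0 : ℝ) ≤ 1 - t - x)]
    nlinarith
  · have hx : 2 * x = t := by
      have : y * (2 * x - t) = 0 := by linarith
      linarith [(mul_eq_zero.mp this).resolve_left hy]
    nlinarith

/-- For `α, β ∈ (0,1]` and `L_a, L_b ≥ 0` with `L_a L_b < 1`, the spectral radius of
`C = [[1-α, α L_a], [(1-α)β L_b, (1-β)+αβ L_a L_b]]` is strictly less than 1. -/
theorem stmt_9 (α β La Lb : ℝ)
    (hα0 : 0 < α) (hα1 : α ≤ 1) (hβ0 : 0 < β) (hβ1 : β ≤ 1)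
    (hLa : 0 ≤ La) (hLb : 0 ≤ Lb) (hLab : La * Lb < 1) :
    spectralRadius ℂ
        ((!![1 - α, α * La;
             (1 - α) * β * Lb, (1 - β) + α * β * La * Lb]).map
          (Complex.ofReal)) < 1 := by
  refine Matrix.spectralRadius_lt_one_of_forall_norm_lt_one _ fun μ hμ => ?_
  rw [mem_spectrum_iff_fin_two, trace_fin_two, det_fin_two] at hμ
  have hαβ : 0 < α * β * (1 - La * Lb) := by have := sub_pos.mpr hLab; positivity
  have hLaLb : 0 ≤ α * β * La * Lb := by positivity
  refine Complex.norm_lt_one_of_sq_sub_mul_add_eq_zero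
    (t := (1 - α) + ((1 - β) + α * β * La * Lb)) (d := (1 - α) * (1 - β)) ?_ ?_ ?_
  · nlinarith
  · rw [abs_of_nonneg (by linarith)]
    nlinarith
  · simp only [map_apply, of_apply, cons_val', cons_val_zero, cons_val_one, empty_val',
      cons_val_fin_one] at hμ
    push_cast at hμ ⊢
    linear_combination hμ
end

section
/- Block spectral radius bound: let C be a block matrix with blocks C_{jk} ∈ ℝ^{l_j × l_k}, and suppose ‖C_{jk}‖ ≤ c_{jk} (operator norm) for all j,k. Then ρ(C) ≤ ρ((c_{jk})_{j,k}), where (c_{jk}) is the m×m nonnegative matrix of the bounds. -/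
open Matrix

/-- The `ℓ²` operator norm of a rectangular real matrix. -/
noncomputable def euclideanOpNorm {p q : Type*} [Fintype p] [Fintype q] [DecidableEq q]
    (M : Matrix p q ℝ) : ℝ :=
  ‖LinearMap.toContinuousLinearMap (Matrix.toEuclideanLin M)‖

/-!
The `(j, k)` block of `A * B` is `∑ i, A_{j i} * B_{i k}`, so submultiplicativity and the triangle
inequality for the `ℓ²` operator norm give `‖(C ^ n)_{j k}‖ ≤ (c ^ n)_{j k}` by induction on `n`.
Hence every entry of `C ^ n` is bounded by the corresponding entry of `c ^ n`, and in the
max-row-sum norm `‖C ^ n‖ ≤ N ‖c ^ n‖`, where `N` is the size of `C`. Gelfand's formula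
`ρ(a) = lim ‖a ^ n‖ ^ (1 / n)` makes the constant `N` disappear.
-/

theorem Matrix.submatrix_sigmaMk_mul {R ι κ ν : Type*} [NonUnitalNonAssocSemiring R] [Fintype κ]
    {α : ι → Type*} {β : κ → Type*} {γ : ν → Type*} [∀ k, Fintype (β k)]
    (A : Matrix (Σ i, α i) (Σ k, β k) R) (B : Matrix (Σ k, β k) (Σ n, γ n) R) (i : ι) (n : ν) :
    (A * B).submatrix (Sigma.mk i) (Sigma.mk n) =
      ∑ k, A.submatrix (Sigma.mk i) (Sigma.mk k) * B.submatrix (Sigma.mk k) (Sigma.mk n) := by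
  ext p q
  simp only [submatrix_apply, mul_apply, sum_apply, Fintype.sum_sigma]

section L2

open scoped Matrix.Norms.L2Operator

variable {𝕜 : Type*} [RCLike 𝕜]

theorem Matrix.norm_apply_le_l2_opNorm {m n : Type*} [Fintype m] [Fintype n] [DecidableEq n]
    (A : Matrix m n 𝕜) (i : m) (j : n) : ‖A i j‖ ≤ ‖A‖ := by
  let x : EuclideanSpace 𝕜 n := EuclideanSpace.single j 1
  have hcol : (EuclideanSpace.equiv m 𝕜).symm (A *ᵥ x) i = A i j := by
    simp [x]
  calc ‖A i j‖ ≤ ‖(EuclideanSpace.equiv m 𝕜).symm (A *ᵥ x)‖ := hcol ▸ PiLp.norm_apply_le _ i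
    _ ≤ ‖A‖ * ‖x‖ := A.l2_opNorm_mulVec x
    _ = ‖A‖ := by simp [x]

variable {ι : Type*} {β : ι → Type*} [∀ i, Fintype (β i)] [∀ i, DecidableEq (β i)]

theorem Matrix.l2_opNorm_one_submatrix_sigmaMk_le [DecidableEq ι] (j k : ι) :
    ‖(1 : Matrix (Σ i, β i) (Σ i, β i) 𝕜).submatrix (Sigma.mk j) (Sigma.mk k)‖ ≤
      (1 : Matrix ι ι ℝ) j k := by
  rcases eq_or_ne j k with rfl | hjk
  · rw [submatrix_one _ sigma_mk_injective, one_apply_eq, ← l2_opNorm_toEuclideanCLM, map_one]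
    exact ContinuousLinearMap.norm_id_le
  · have hzero :
        (1 : Matrix (Σ i, β i) (Σ i, β i) 𝕜).submatrix (Sigma.mk j) (Sigma.mk k) = 0 := by
      ext p q
      simp [hjk]
    rw [hzero, one_apply_ne hjk, norm_zero]

variable [Fintype ι]

theorem Matrix.l2_opNorm_mul_submatrix_sigmaMk_le {A B : Matrix (Σ i, β i) (Σ i, β i) 𝕜}
    {a b : Matrix ι ι ℝ} (hA : ∀ j k, ‖A.submatrix (Sigma.mk j) (Sigma.mk k)‖ ≤ a j k)
    (hB : ∀ j k, ‖B.submatrix (Sigma.mk j) (Sigma.mk k)‖ ≤ b j k) (j k : ι) :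
    ‖(A * B).submatrix (Sigma.mk j) (Sigma.mk k)‖ ≤ (a * b) j k := by
  rw [submatrix_sigmaMk_mul, mul_apply]
  refine (norm_sum_le _ _).trans (Finset.sum_le_sum fun i _ => ?_)
  exact (l2_opNorm_mul _ _).trans <|
    mul_le_mul (hA j i) (hB i k) (norm_nonneg _) ((norm_nonneg _).trans (hA j i))

variable [DecidableEq ι]

theorem Matrix.l2_opNorm_pow_submatrix_sigmaMk_le {C : Matrix (Σ i, β i) (Σ i, β i) 𝕜}
    {c : Matrix ι ι ℝ} (hC : ∀ j k, ‖C.submatrix (Sigma.mk j) (Sigma.mk k)‖ ≤ c j k) (n : ℕ) :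
    ∀ j k, ‖(C ^ n).submatrix (Sigma.mk j) (Sigma.mk k)‖ ≤ (c ^ n) j k := by
  induction n with
  | zero => simpa using l2_opNorm_one_submatrix_sigmaMk_le
  | succ n ih => simpa only [pow_succ] using l2_opNorm_mul_submatrix_sigmaMk_le ih hC

theorem Matrix.norm_pow_apply_le_of_l2_opNorm_submatrix_sigmaMk_le
    {C : Matrix (Σ i, β i) (Σ i, β i) 𝕜} {c : Matrix ι ι ℝ}
    (hC : ∀ j k, ‖C.submatrix (Sigma.mk j) (Sigma.mk k)‖ ≤ c j k) (n : ℕ) (j : ι) (p : β j)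
    (k : ι) (q : β k) : ‖(C ^ n) ⟨j, p⟩ ⟨k, q⟩‖ ≤ (c ^ n) j k :=
  ((C ^ n).submatrix (Sigma.mk j) (Sigma.mk k)).norm_apply_le_l2_opNorm p q |>.trans
    (l2_opNorm_pow_submatrix_sigmaMk_le hC n j k)

end L2

section Gelfand

open Filter Topology NNReal ENNReal

theorem spectralRadius_le_of_nnnorm_pow_le {A B : Type*} [NormedRing A] [NormedAlgebra ℂ A]
    [CompleteSpace A] [NormedRing B] [NormedAlgebra ℂ B] [CompleteSpace B] {a : A} {b : B}
    (K : ℝ≥0) (h : ∀ n : ℕ, ‖a ^ n‖₊ ≤ K * ‖b ^ n‖₊) :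
    spectralRadius ℂ a ≤ spectralRadius ℂ b := by
  -- `K + 1` rather than `K`: its `n`-th roots tend to `1` even when `K = 0`.
  have hK : Tendsto (fun n : ℕ => ((K + 1 : ℝ≥0) : ℝ≥0∞) ^ (1 / n : ℝ)) atTop (𝓝 1) := by
    have := (tendsto_const_nhds (x := K + 1)).nnrpow tendsto_one_div_atTop_nhds_zero_nat
      (Or.inl (by positivity))
    rw [NNReal.rpow_zero] at this
    simpa [ENNReal.coe_rpow_of_ne_zero] using ENNReal.tendsto_coe.2 this
  have hb := ENNReal.Tendsto.mul hK (Or.inl one_ne_zero)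
    (spectrum.pow_nnnorm_pow_one_div_tendsto_nhds_spectralRadius b) (Or.inr one_ne_top)
  rw [one_mul] at hb
  refine le_of_tendsto_of_tendsto'
    (spectrum.pow_nnnorm_pow_one_div_tendsto_nhds_spectralRadius a) hb fun n => ?_
  rw [← ENNReal.mul_rpow_of_nonneg _ _ (by positivity)]
  gcongr
  exact_mod_cast (h n).trans (by gcongr; exact le_self_add)

end Gelfand

section LinftyOp

attribute [local instance] Matrix.linftyOpSeminormedAddCommGroup

theorem Matrix.linfty_opNNNorm_le_card_mul_of_norm_apply_le {ι κ E F : Type*} [Fintype ι]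
    [Fintype κ] {β : ι → Type*} {γ : κ → Type*} [∀ i, Fintype (β i)] [∀ k, Fintype (γ k)]
    [SeminormedAddCommGroup E] [SeminormedAddCommGroup F]
    {A : Matrix (Σ i, β i) (Σ k, γ k) E} {B : Matrix ι κ F}
    (h : ∀ j p k q, ‖A ⟨j, p⟩ ⟨k, q⟩‖ ≤ ‖B j k‖) :
    ‖A‖₊ ≤ Fintype.card (Σ k, γ k) * ‖B‖₊ := by
  rw [linfty_opNNNorm_def, linfty_opNNNorm_def, Finset.mul_sup₀]
  refine Finset.sup_le fun ⟨j, p⟩ _ => le_trans ?_ (Finset.le_sup (Finset.mem_univ j))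
  calc ∑ x : Σ k, γ k, ‖A ⟨j, p⟩ x‖₊
      = ∑ k, ∑ q, ‖A ⟨j, p⟩ ⟨k, q⟩‖₊ := Fintype.sum_sigma _
    _ ≤ ∑ k, ∑ _q : γ k, ‖B j k‖₊ := by
      gcongr with k q
      exact h j p k q
    _ = ∑ k, Fintype.card (γ k) * ‖B j k‖₊ := by simp
    _ ≤ ∑ k, Fintype.card (Σ k, γ k) * ‖B j k‖₊ := by
      gcongr with k
      exact Fintype.card_le_of_injective _ sigma_mk_injective
    _ = _ := (Finset.mul_sum ..).symm

attribute [local instance] Matrix.linftyOpNormedRing Matrix.linftyOpNormedAlgebra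

theorem Matrix.spectralRadius_map_ofReal_le_of_norm_pow_apply_le {ι : Type*} [Fintype ι]
    [DecidableEq ι] {β : ι → Type*} [∀ i, Fintype (β i)] [∀ i, DecidableEq (β i)]
    {C : Matrix (Σ i, β i) (Σ i, β i) ℝ} {c : Matrix ι ι ℝ}
    (h : ∀ n j p k q, ‖(C ^ n) ⟨j, p⟩ ⟨k, q⟩‖ ≤ (c ^ n) j k) :
    spectralRadius ℂ (C.map Complex.ofReal) ≤ spectralRadius ℂ (c.map Complex.ofReal) := by
  refine spectralRadius_le_of_nnnorm_pow_le (Fintype.card (Σ i, β i)) fun n => ?_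
  change ‖C.map Complex.ofRealHom ^ n‖₊ ≤ _ * ‖c.map Complex.ofRealHom ^ n‖₊
  rw [← Matrix.map_pow, ← Matrix.map_pow]
  refine linfty_opNNNorm_le_card_mul_of_norm_apply_le fun j p k q => ?_
  simpa using (h n j p k q).trans (le_abs_self _)

end LinftyOp

theorem stmt_11_general {m : ℕ} (l : Fin m → ℕ)
    (C : Matrix ((j : Fin m) × Fin (l j)) ((j : Fin m) × Fin (l j)) ℝ)
    (c : Matrix (Fin m) (Fin m) ℝ)
    (h : ∀ j k,
      euclideanOpNorm (Matrix.of fun (p : Fin (l j)) (q : Fin (l k)) => C ⟨j, p⟩ ⟨k, q⟩) ≤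
        c j k) :
    spectralRadius ℂ (C.map (Complex.ofReal)) ≤ spectralRadius ℂ (c.map (Complex.ofReal)) :=
  -- The blocks in `h` are `C.submatrix (Sigma.mk j) (Sigma.mk k)`, and `euclideanOpNorm` is the
  -- `ℓ²` operator norm, both definitionally.
  spectralRadius_map_ofReal_le_of_norm_pow_apply_le
    (norm_pow_apply_le_of_l2_opNorm_submatrix_sigmaMk_le h)

/-- Block spectral radius bound: if each block of `C` has operator norm bounded by the
corresponding entry of the nonnegative matrix `c`, then `ρ(C) ≤ ρ(c)`. -/
theorem stmt_11 {m : ℕ} (l : Fin m → ℕ)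
    (C : Matrix ((j : Fin m) × Fin (l j)) ((j : Fin m) × Fin (l j)) ℝ)
    (c : Matrix (Fin m) (Fin m) ℝ) (hc : ∀ j k, 0 ≤ c j k)
    (h : ∀ j k,
      euclideanOpNorm (Matrix.of fun (p : Fin (l j)) (q : Fin (l k)) => C ⟨j, p⟩ ⟨k, q⟩) ≤
        c j k) :
    spectralRadius ℂ (C.map (Complex.ofReal)) ≤ spectralRadius ℂ (c.map (Complex.ofReal)) :=
  stmt_11_general l C c h
end

section
/- Let f: ℝ^d → ℝ^d be a continuously differentiable diffeomorphism onto its image such that for every fixed x^H, the restriction x^O ↦ f^O(x^O; x^H) is a diffeomorphism from ℝ^{d^O} onto an open set. Then with g = f^{-1}, for every fixed y^O the map y^H ↦ g^H(y^H; y^O) has an invertible Jacobian at every point, namely G^{HH} = (J^{HH} - J^{HO}(J^{OO})^{-1} J^{OH})^{-1} evaluated at the corresponding point. -/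
open Matrix

/-- The Jacobian matrix of a map `f : (ι → ℝ) → (ι → ℝ)` at `x`. -/
noncomputable def jacobianMatrix {ι : Type*} [Fintype ι] [DecidableEq ι]
    (f : (ι → ℝ) → (ι → ℝ)) (x : ι → ℝ) : Matrix ι ι ℝ :=
  LinearMap.toMatrix' (fderiv ℝ f x).toLinearMap

/-!
By the chain rule the Jacobian `G` of `g` at `f x` is a left inverse of the Jacobian `J` of `f`
at `x`. The bottom block row of `G J = 1` reads `G^{HO} J^{OO} + G^{HH} J^{HO} = 0` and
`G^{HO} J^{OH} + G^{HH} J^{HH} = 1`; eliminating `G^{HO}` with `(J^{OO})⁻¹` shows that `G^{HH}`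
inverts the Schur complement `J^{HH} - J^{HO} (J^{OO})⁻¹ J^{OH}`. Finally, `G^{HH}` is the
derivative of the partial map `y^H ↦ g^H(y^O, y^H)` by the chain rule through the affine
embedding `y^H ↦ (y^O, y^H)`.
-/

namespace Matrix

variable {m n α : Type*} [Fintype m] [Fintype n] [DecidableEq m] [DecidableEq n] [CommRing α]

theorem toBlocks₂₂_mul_schurComplement_eq_one {G M : Matrix (m ⊕ n) (m ⊕ n) α} (hGM : G * M = 1)
    (hA : IsUnit M.toBlocks₁₁.det) :
    G.toBlocks₂₂ * (M.toBlocks₂₂ - M.toBlocks₂₁ * M.toBlocks₁₁⁻¹ * M.toBlocks₁₂) = 1 := by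
  rw [← fromBlocks_toBlocks G, ← fromBlocks_toBlocks M, fromBlocks_multiply, ← fromBlocks_one,
    fromBlocks_inj] at hGM
  obtain ⟨-, -, hC, hD⟩ := hGM
  calc G.toBlocks₂₂ * (M.toBlocks₂₂ - M.toBlocks₂₁ * M.toBlocks₁₁⁻¹ * M.toBlocks₁₂)
      = G.toBlocks₂₂ * M.toBlocks₂₂ -
          (G.toBlocks₂₂ * M.toBlocks₂₁) * M.toBlocks₁₁⁻¹ * M.toBlocks₁₂ := by
        simp only [Matrix.mul_sub, Matrix.mul_assoc]
    _ = G.toBlocks₂₂ * M.toBlocks₂₂ +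
          G.toBlocks₂₁ * (M.toBlocks₁₁ * M.toBlocks₁₁⁻¹) * M.toBlocks₁₂ := by
        rw [eq_neg_of_add_eq_zero_right hC]
        simp only [Matrix.neg_mul, Matrix.mul_assoc, sub_neg_eq_add]
    _ = 1 := by rw [mul_nonsing_inv _ hA, Matrix.mul_one, add_comm, hD]

end Matrix

section jacobianMatrix

variable {ι : Type*} [Fintype ι] [DecidableEq ι]

theorem jacobianMatrix_mulVec (f : (ι → ℝ) → (ι → ℝ)) (x v : ι → ℝ) :
    jacobianMatrix f x *ᵥ v = fderiv ℝ f x v :=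
  LinearMap.toMatrix'_mulVec _ v

theorem jacobianMatrix_id (x : ι → ℝ) : jacobianMatrix id x = 1 := by
  simp [jacobianMatrix]

theorem jacobianMatrix_comp {f g : (ι → ℝ) → (ι → ℝ)} {x : ι → ℝ}
    (hg : DifferentiableAt ℝ g (f x)) (hf : DifferentiableAt ℝ f x) :
    jacobianMatrix (g ∘ f) x = jacobianMatrix g (f x) * jacobianMatrix f x := by
  rw [jacobianMatrix, fderiv_comp x hg hf]
  exact LinearMap.toMatrix'_comp _ _

theorem jacobianMatrix_mul_eq_one_of_leftInverse {f g : (ι → ℝ) → (ι → ℝ)} {x : ι → ℝ}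
    (hgf : Function.LeftInverse g f) (hg : DifferentiableAt ℝ g (f x))
    (hf : DifferentiableAt ℝ f x) :
    jacobianMatrix g (f x) * jacobianMatrix f x = 1 := by
  rw [← jacobianMatrix_comp hg hf, hgf.comp_eq_id, jacobianMatrix_id]

end jacobianMatrix

theorem hasFDerivAt_sumElim_right {m n : Type*} [Fintype n] (c : m → ℝ) (y : n → ℝ) :
    HasFDerivAt (fun z : n → ℝ => Sum.elim c z)
      (ContinuousLinearMap.pi (Sum.elim (fun _ => 0) (ContinuousLinearMap.proj (R := ℝ))) :
        (n → ℝ) →L[ℝ] (m ⊕ n → ℝ)) y := by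
  refine hasFDerivAt_pi.2 fun k => ?_
  cases k with
  | inl i => exact hasFDerivAt_const (c i) y
  | inr j => exact hasFDerivAt_apply j y

theorem hasFDerivAt_partial_toBlocks₂₂ {m n : Type*} [Fintype m] [Fintype n] [DecidableEq m]
    [DecidableEq n] {g : (m ⊕ n → ℝ) → (m ⊕ n → ℝ)} {c : m → ℝ} {y : n → ℝ}
    (hg : DifferentiableAt ℝ g (Sum.elim c y)) :
    HasFDerivAt (fun z : n → ℝ => fun j => g (Sum.elim c z) (Sum.inr j))
      (mulVecLin (jacobianMatrix g (Sum.elim c y)).toBlocks₂₂).toContinuousLinearMap y := by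
  refine hasFDerivAt_pi'.2 fun j => ?_
  refine ((hasFDerivAt_apply (Sum.inr j) _).comp y
    (hg.hasFDerivAt.comp y (hasFDerivAt_sumElim_right c y))).congr_fderiv ?_
  ext v
  simp [← jacobianMatrix_mulVec, mulVec, dotProduct, Fintype.sum_sum_type, toBlocks₂₂]

theorem stmt_13_general {dO dH : ℕ}
    (f g : ((Fin dO ⊕ Fin dH) → ℝ) → ((Fin dO ⊕ Fin dH) → ℝ))
    (hf : ContDiff ℝ 1 f) (hg : ContDiff ℝ 1 g)
    (hgf : Function.LeftInverse g f)
    (hJOO : ∀ x, IsUnit ((jacobianMatrix f x).toBlocks₁₁).det) :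
    ∀ x : (Fin dO ⊕ Fin dH) → ℝ,
      IsUnit ((jacobianMatrix g (f x)).toBlocks₂₂).det ∧
      (jacobianMatrix g (f x)).toBlocks₂₂ =
        ((jacobianMatrix f x).toBlocks₂₂ -
          (jacobianMatrix f x).toBlocks₂₁ * ((jacobianMatrix f x).toBlocks₁₁)⁻¹ *
            (jacobianMatrix f x).toBlocks₁₂)⁻¹ ∧
      HasFDerivAt
        (fun yH : Fin dH → ℝ => fun j : Fin dH =>
          g (Sum.elim (fun i => f x (Sum.inl i)) yH) (Sum.inr j))
        (LinearMap.toContinuousLinearMap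
          (Matrix.mulVecLin ((jacobianMatrix g (f x)).toBlocks₂₂)))
        (fun j : Fin dH => f x (Sum.inr j)) := by
  intro x
  have hgd : DifferentiableAt ℝ g (f x) := hg.differentiable one_ne_zero (f x)
  have hGS := toBlocks₂₂_mul_schurComplement_eq_one
    (jacobianMatrix_mul_eq_one_of_leftInverse hgf hgd (hf.differentiable one_ne_zero x)) (hJOO x)
  refine ⟨isUnit_det_of_right_inverse hGS, (inv_eq_left_inv hGS).symm, ?_⟩
  have hsplit : Sum.elim (fun i => f x (Sum.inl i)) (fun j => f x (Sum.inr j)) = f x :=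
    Sum.elim_comp_inl_inr (f x)
  have hpartial := hasFDerivAt_partial_toBlocks₂₂ (c := fun i => f x (Sum.inl i))
    (y := fun j => f x (Sum.inr j)) (hsplit ▸ hgd)
  rwa [hsplit] at hpartial

/-- If `f` is a `C¹` diffeomorphism (with inverse `g`) whose Jacobian `J` and whose
`OO`-block `J^{OO}` are invertible everywhere, then for every fixed `y^O` the map
`y^H ↦ g^H(y^H; y^O)` has invertible Jacobian
`G^{HH} = (J^{HH} - J^{HO}(J^{OO})⁻¹J^{OH})⁻¹` at every point. -/
theorem stmt_13 {dO dH : ℕ}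
    (f g : ((Fin dO ⊕ Fin dH) → ℝ) → ((Fin dO ⊕ Fin dH) → ℝ))
    (hf : ContDiff ℝ 1 f) (hg : ContDiff ℝ 1 g)
    (hgf : Function.LeftInverse g f) (hfg : Function.RightInverse g f)
    (hJ : ∀ x, IsUnit (jacobianMatrix f x).det)
    (hJOO : ∀ x, IsUnit ((jacobianMatrix f x).toBlocks₁₁).det) :
    ∀ x : (Fin dO ⊕ Fin dH) → ℝ,
      IsUnit ((jacobianMatrix g (f x)).toBlocks₂₂).det ∧
      (jacobianMatrix g (f x)).toBlocks₂₂ =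
        ((jacobianMatrix f x).toBlocks₂₂ -
          (jacobianMatrix f x).toBlocks₂₁ * ((jacobianMatrix f x).toBlocks₁₁)⁻¹ *
            (jacobianMatrix f x).toBlocks₁₂)⁻¹ ∧
      HasFDerivAt
        (fun yH : Fin dH → ℝ => fun j : Fin dH =>
          g (Sum.elim (fun i => f x (Sum.inl i)) yH) (Sum.inr j))
        (LinearMap.toContinuousLinearMap
          (Matrix.mulVecLin ((jacobianMatrix g (f x)).toBlocks₂₂)))
        (fun j : Fin dH => f x (Sum.inr j)) :=
  stmt_13_general f g hf hg hgf hJOO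
end
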